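/- Let 0 < δ < 1 and let A = (a_{ij}) be an n×n real matrix with δ ≤ a_{ij} ≤ 1 for all i,j. Then Σ_{σ ∈ S_n, c(σ) ≤ 4 + 4δ^{-2} ln n} ∏_{i=1}^n a_{iσ(i)} ≥ (1/2) per(A). -/

import Mathlib

open scoped Classical

/-- The number of cycles of a permutation, counting fixed points as cycles. -/
def cycleCount {n : ℕ} (σ : Equiv.Perm (Fin n)) : ℕ :=
  σ.cycleType.card + (Finset.univ.filter fun i => σ i = i).card

/-!
Weight a permutation `σ` by `w σ = ∏ₖ a_{k σ(k)}` and write `c(σ) = ∑ᵢ 1 / ℓ(i)`, where `ℓ(i)` is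
the length of the cycle of `σ` through `i`. Points on cycles longer than `n / 4` contribute at
most `4`. If `i` lies on a cycle of length `k` and `j` off it, then `σ * swap i j` joins the two
cycles, has weight at least `δ² w σ`, and determines `j` from `i` as the point sent to `i` by its
`k`-th power. Counting such triples `(σ, i, j)` shows that the `w`-weighted number of points on
`k`-cycles is at most `(4 / 3) δ⁻² per A` for `k ≤ n / 4`, so the `w`-average of `c` is at most
`4 + (4 / 3) δ⁻² (1 + log (n / 4))`. Markov's inequality for `c - 1 ≥ 0` finishes the proof.
-/

open Equiv Finset

namespace Equiv.Perm

variable {α : Type*} [Fintype α] [DecidableEq α] {σ : Perm α} {i j : α}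

def cycleLength (σ : Perm α) (i : α) : ℕ := #{j | σ.SameCycle i j}

theorem cycleLength_of_apply_eq (h : σ i = i) : σ.cycleLength i = 1 := by
  rw [cycleLength, card_eq_one]
  exact ⟨i, by ext j; simpa [eq_comm] using ⟨fun hs => hs.eq_of_left h, fun h' => h' ▸ .refl _ _⟩⟩

theorem cycleLength_of_apply_ne (h : σ i ≠ i) : σ.cycleLength i = #(σ.cycleOf i).support := by
  rw [cycleLength]
  congr 1
  ext j
  simp [mem_support_cycleOf_iff' h]

theorem cycleLength_pos (σ : Perm α) (i : α) : 0 < σ.cycleLength i :=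
  card_pos.2 ⟨i, mem_filter.2 ⟨mem_univ _, .refl _ _⟩⟩

theorem cycleLength_le_card (σ : Perm α) (i : α) : σ.cycleLength i ≤ Fintype.card α :=
  card_le_univ _

theorem pow_apply_eq_self_iff_cycleLength_dvd {s : ℕ} :
    (σ ^ s) i = i ↔ σ.cycleLength i ∣ s := by
  by_cases h : σ i = i
  · simp [cycleLength_of_apply_eq h, pow_apply_eq_self_of_apply_eq_self h]
  · rw [cycleLength_of_apply_ne h]
    exact (isCycleOn_support_cycleOf σ i).pow_apply_eq
      (mem_support_cycleOf_iff.2 ⟨.refl _ _, mem_support.2 h⟩)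

theorem card_not_sameCycle (σ : Perm α) (i : α) :
    #{j | ¬σ.SameCycle i j} = Fintype.card α - σ.cycleLength i := by
  rw [filter_not, card_sdiff_of_subset (filter_subset _ _), card_univ, cycleLength]

theorem sum_inv_cycleLength_support (σ : Perm α) :
    ∑ i ∈ σ.support, (σ.cycleLength i : ℝ)⁻¹ = σ.cycleType.card := by
  rw [← sum_fiberwise_of_maps_to (g := σ.cycleOf) fun i hi =>
    cycleOf_mem_cycleFactorsFinset_iff.2 hi, cycleType_def, Multiset.card_map, ← card_def,
    card_eq_sum_ones, Nat.cast_sum]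
  refine sum_congr rfl fun c hc => ?_
  have hfiber : {i ∈ σ.support | σ.cycleOf i = c} = c.support := by
    ext i
    refine ⟨fun hi => ?_, fun hi => ?_⟩
    · obtain ⟨hσi, rfl⟩ := mem_filter.1 hi
      exact mem_support_cycleOf_iff.2 ⟨.refl _ _, hσi⟩
    · obtain rfl := cycle_is_cycleOf hi hc
      exact mem_filter.2 ⟨support_cycleOf_le σ i hi, rfl⟩
  have hlen : ∀ i ∈ c.support, σ.cycleLength i = #c.support := fun i hi => by
    obtain rfl := cycle_is_cycleOf hi hc
    exact cycleLength_of_apply_ne (mem_support.1 (support_cycleOf_le σ i hi))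
  have hc_pos : (#c.support : ℝ) ≠ 0 := by
    exact_mod_cast (card_pos.2 (mem_cycleFactorsFinset_iff.1 hc).1.nonempty_support).ne'
  rw [hfiber, sum_congr rfl fun i hi => by rw [hlen i hi], sum_const, nsmul_eq_mul,
    mul_inv_cancel₀ hc_pos, Nat.cast_one]

theorem mul_swap_pow_apply (hj : ¬σ.SameCycle i j) {s : ℕ} (hs₀ : 1 ≤ s)
    (hs : s ≤ σ.cycleLength i) : ((σ * swap i j) ^ s) j = (σ ^ s) i := by
  induction s, hs₀ using Nat.le_induction with
  | base => simp
  | succ s hs₀ ih =>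
    have hne_i : (σ ^ s) i ≠ i := fun h =>
      Nat.not_dvd_of_pos_of_lt hs₀ (by omega) (pow_apply_eq_self_iff_cycleLength_dvd.1 h)
    have hne_j : (σ ^ s) i ≠ j := fun h => hj ⟨s, by rw [zpow_natCast, h]⟩
    rw [pow_succ', mul_apply, ih (by omega), mul_apply, swap_apply_of_ne_of_ne hne_i hne_j,
      pow_succ', mul_apply]

theorem mul_swap_pow_cycleLength_apply (hj : ¬σ.SameCycle i j) :
    ((σ * swap i j) ^ σ.cycleLength i) j = i := by
  rw [mul_swap_pow_apply hj (cycleLength_pos σ i) le_rfl,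
    pow_apply_eq_self_iff_cycleLength_dvd.2 dvd_rfl]

theorem eq_of_mul_swap_eq {σ' : Perm α} {j' : α} (hj : ¬σ.SameCycle i j)
    (hj' : ¬σ'.SameCycle i j') (hlen : σ.cycleLength i = σ'.cycleLength i)
    (h : σ * swap i j = σ' * swap i j') : σ = σ' ∧ j = j' := by
  have hjj' : j = j' := by
    have h₁ := mul_swap_pow_cycleLength_apply hj
    rw [hlen, h] at h₁
    exact ((σ' * swap i j') ^ σ'.cycleLength i).injective
      (h₁.trans (mul_swap_pow_cycleLength_apply hj').symm)
  subst hjj'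
  exact ⟨mul_right_cancel h, rfl⟩

def offCycleTriples (k : ℕ) : Finset (Perm α × α × α) :=
  {q | q.1.cycleLength q.2.1 = k ∧ ¬q.1.SameCycle q.2.1 q.2.2}

theorem sum_offCycleTriples (f : Perm α → ℝ) (k : ℕ) :
    ∑ q ∈ offCycleTriples k, f q.1 =
      ((Fintype.card α : ℝ) - k) * ∑ σ : Perm α, #{i | σ.cycleLength i = k} * f σ := by
  rw [offCycleTriples, sum_filter, Fintype.sum_prod_type, mul_sum]
  refine sum_congr rfl fun σ _ => ?_
  have hrow : ∀ i, ∑ j, (if σ.cycleLength i = k ∧ ¬σ.SameCycle i j then f σ else 0) =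
      if σ.cycleLength i = k then ((Fintype.card α : ℝ) - k) * f σ else 0 := fun i => by
    split_ifs with h
    · simp only [h, true_and]
      rw [← sum_filter, sum_const, card_not_sameCycle, nsmul_eq_mul,
        Nat.cast_sub (h ▸ cycleLength_le_card σ i), h]
    · simp [h]
  rw [Fintype.sum_prod_type, sum_congr rfl fun i _ => hrow i, ← sum_filter, sum_const,
    nsmul_eq_mul]
  ring

theorem sum_offCycleTriples_mul_swap_le {f : Perm α → ℝ} (hf : ∀ σ, 0 ≤ f σ) (k : ℕ) :
    ∑ q ∈ offCycleTriples k, f (q.1 * swap q.2.1 q.2.2) ≤ Fintype.card α * ∑ σ, f σ := by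
  set Φ : Perm α × α × α → Perm α × α := fun q => (q.1 * swap q.2.1 q.2.2, q.2.1)
  have hΦ : Set.InjOn Φ (offCycleTriples (α := α) k) := by
    rintro ⟨σ, i, j⟩ hq ⟨σ', i', j'⟩ hq' h
    simp only [offCycleTriples, coe_filter, mem_univ, true_and, Set.mem_ofPred_eq] at hq hq'
    obtain ⟨h, rfl⟩ := Prod.mk.inj h
    obtain ⟨rfl, rfl⟩ := eq_of_mul_swap_eq hq.2 hq'.2 (hq.1.trans hq'.1.symm) h
    rfl
  calc ∑ q ∈ offCycleTriples k, f (q.1 * swap q.2.1 q.2.2)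
      = ∑ p ∈ (offCycleTriples k).image Φ, f p.1 := (sum_image (f := fun p => f p.1) hΦ).symm
    _ ≤ ∑ p : Perm α × α, f p.1 :=
      sum_le_sum_of_subset_of_nonneg (subset_univ _) fun p _ _ => hf p.1
    _ = Fintype.card α * ∑ σ, f σ := by simp [Fintype.sum_prod_type, mul_sum]

theorem sum_inv_cycleLength_le (σ : Perm α) (m : ℕ) :
    ∑ i, (σ.cycleLength i : ℝ)⁻¹ ≤
      Fintype.card α / (m + 1) + ∑ k ∈ Icc 1 m, (#{i | σ.cycleLength i = k} : ℝ) / k := by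
  rw [← sum_filter_not_add_sum_filter univ (fun i => σ.cycleLength i ≤ m)]
  have hlong : ∑ i ∈ {i | ¬σ.cycleLength i ≤ m}, (σ.cycleLength i : ℝ)⁻¹ ≤
      Fintype.card α / (m + 1) :=
    calc _ ≤ ∑ _i ∈ {i | ¬σ.cycleLength i ≤ m}, ((m : ℝ) + 1)⁻¹ :=
          sum_le_sum fun i hi => inv_anti₀ (by positivity) <| by
            exact_mod_cast Nat.lt_of_not_le (mem_filter.1 hi).2
      _ ≤ ∑ _i : α, ((m : ℝ) + 1)⁻¹ :=
          sum_le_sum_of_subset_of_nonneg (subset_univ _) fun _ _ _ => by positivity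
      _ = Fintype.card α / (m + 1) := by simp [div_eq_mul_inv]
  have hshort : ∑ i ∈ {i | σ.cycleLength i ≤ m}, (σ.cycleLength i : ℝ)⁻¹ =
      ∑ k ∈ Icc 1 m, (#{i | σ.cycleLength i = k} : ℝ) / k := by
    rw [← sum_fiberwise_of_maps_to (t := Icc 1 m) (g := σ.cycleLength) fun i hi =>
      mem_Icc.2 ⟨cycleLength_pos σ i, (mem_filter.1 hi).2⟩]
    refine sum_congr rfl fun k hk => ?_
    rw [filter_filter, filter_congr fun i _ => and_iff_right_of_imp fun h => h ▸ (mem_Icc.1 hk).2,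
      sum_congr rfl fun i hi => by rw [(mem_filter.1 hi).2], sum_const, nsmul_eq_mul,
      div_eq_mul_inv]
  linarith

end Equiv.Perm

theorem cycleCount_eq_sum_inv_cycleLength {n : ℕ} (σ : Perm (Fin n)) :
    (cycleCount σ : ℝ) = ∑ i, (σ.cycleLength i : ℝ)⁻¹ := by
  rw [← sum_filter_not_add_sum_filter univ (fun i => σ i = i)]
  have hsupp : ({i | ¬σ i = i} : Finset (Fin n)) = σ.support := by ext; simp
  rw [hsupp, Perm.sum_inv_cycleLength_support,
    sum_congr rfl fun i hi => by rw [Perm.cycleLength_of_apply_eq (mem_filter.1 hi).2],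
    sum_const, cycleCount]
  simp

section Weights

variable {ι : Type*} [Fintype ι] [DecidableEq ι] {δ : ℝ} {A : Matrix ι ι ℝ}

theorem sq_mul_prod_le_prod_mul_swap (hδ : 0 ≤ δ) (hA : ∀ i j, δ ≤ A i j ∧ A i j ≤ 1)
    (σ : Perm ι) {i j : ι} (hij : i ≠ j) :
    δ ^ 2 * ∏ k, A k (σ k) ≤ ∏ k, A k ((σ * swap i j) k) := by
  have hA₀ : ∀ i j, 0 ≤ A i j := fun i j => hδ.trans (hA i j).1
  have hsplit : ∀ f : ι → ℝ, ∏ k, f k = f i * f j * ∏ k ∈ {i, j}ᶜ, f k := fun f => by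
    rw [← prod_pair hij, prod_mul_prod_compl]
  have hrest : ∏ k ∈ {i, j}ᶜ, A k ((σ * swap i j) k) = ∏ k ∈ {i, j}ᶜ, A k (σ k) :=
    prod_congr rfl fun k hk => by
      simp only [mem_compl, mem_insert, mem_singleton, not_or] at hk
      rw [Perm.mul_apply, swap_apply_of_ne_of_ne hk.1 hk.2]
  rw [hsplit (fun k => A k (σ k)), hsplit (fun k => A k ((σ * swap i j) k)), hrest, Perm.mul_apply,
    Perm.mul_apply, swap_apply_left, swap_apply_right]
  have hR : 0 ≤ ∏ k ∈ {i, j}ᶜ, A k (σ k) := prod_nonneg fun k _ => hA₀ _ _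
  have hold : A i (σ i) * A j (σ j) ≤ 1 := mul_le_one₀ (hA _ _).2 (hA₀ _ _) (hA _ _).2
  have hnew : δ ^ 2 ≤ A i (σ j) * A j (σ i) := by
    rw [sq]; exact mul_le_mul (hA _ _).1 (hA _ _).1 hδ (hA₀ _ _)
  nlinarith [mul_le_mul_of_nonneg_right hold (mul_nonneg (sq_nonneg δ) hR),
    mul_le_mul_of_nonneg_right hnew hR]

theorem sq_mul_card_sub_mul_sum_le (hδ : 0 ≤ δ) (hA : ∀ i j, δ ≤ A i j ∧ A i j ≤ 1) (k : ℕ) :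
    δ ^ 2 * ((Fintype.card ι : ℝ) - k) *
        ∑ σ : Perm ι, #{i | σ.cycleLength i = k} * ∏ l, A l (σ l) ≤
      Fintype.card ι * ∑ σ : Perm ι, ∏ l, A l (σ l) := by
  have hW : ∀ σ : Perm ι, 0 ≤ ∏ l, A l (σ l) := fun σ => prod_nonneg fun l _ => hδ.trans (hA _ _).1
  calc _ = ∑ q ∈ Perm.offCycleTriples k, δ ^ 2 * ∏ l, A l (q.1 l) := by
        rw [← mul_sum, Perm.sum_offCycleTriples (fun σ => ∏ l, A l (σ l)), mul_assoc]
    _ ≤ ∑ q ∈ Perm.offCycleTriples k, ∏ l, A l ((q.1 * swap q.2.1 q.2.2) l) :=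
        sum_le_sum fun q hq => sq_mul_prod_le_prod_mul_swap hδ hA q.1 fun h =>
          (mem_filter.1 hq).2.2 (h ▸ .refl _ _)
    _ ≤ _ := Perm.sum_offCycleTriples_mul_swap_le hW k

end Weights

theorem cycleCount_le {n : ℕ} (σ : Perm (Fin n)) : (cycleCount σ : ℝ) ≤ n := by
  rw [cycleCount_eq_sum_inv_cycleLength]
  calc _ ≤ ∑ _i : Fin n, (1 : ℝ) := sum_le_sum fun i _ =>
        inv_le_one_of_one_le₀ (by exact_mod_cast σ.cycleLength_pos i)
    _ = n := by simp

theorem one_le_cycleCount {n : ℕ} (hn : 0 < n) (σ : Perm (Fin n)) : 1 ≤ (cycleCount σ : ℝ) := by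
  rw [cycleCount_eq_sum_inv_cycleLength]
  calc (1 : ℝ) = ∑ _i : Fin n, (n : ℝ)⁻¹ := by simp [hn.ne']
    _ ≤ _ := sum_le_sum fun i _ => inv_anti₀ (by exact_mod_cast σ.cycleLength_pos i) <| by
        simpa using (σ.cycleLength_le_card i : _ ≤ Fintype.card (Fin n))

theorem half_sum_le_sum_filter_le {β : Type*} (s : Finset β) {f w : β → ℝ} {t : ℝ} (ht : 1 < t)
    (hf : ∀ x ∈ s, 1 ≤ f x) (hw : ∀ x ∈ s, 0 ≤ w x)
    (h : ∑ x ∈ s, f x * w x ≤ (1 + t) / 2 * ∑ x ∈ s, w x) :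
    1 / 2 * ∑ x ∈ s, w x ≤ ∑ x ∈ s with f x ≤ t, w x := by
  have hgood : ∑ x ∈ s with f x ≤ t, w x ≤ ∑ x ∈ s with f x ≤ t, f x * w x :=
    sum_le_sum fun x hx =>
      le_mul_of_one_le_left (hw x (mem_filter.1 hx).1) (hf x (mem_filter.1 hx).1)
  have hbad : t * ∑ x ∈ s with ¬f x ≤ t, w x ≤ ∑ x ∈ s with ¬f x ≤ t, f x * w x := by
    rw [mul_sum]
    exact sum_le_sum fun x hx => mul_le_mul_of_nonneg_right
      (not_le.1 (mem_filter.1 hx).2).le (hw x (mem_filter.1 hx).1)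
  have hw_split := sum_filter_add_sum_filter_not s (fun x => f x ≤ t) w
  have hfw_split := sum_filter_add_sum_filter_not s (fun x => f x ≤ t) fun x => f x * w x
  nlinarith

theorem sum_cycleCount_mul_prod_le {n : ℕ} {δ : ℝ} {A : Matrix (Fin n) (Fin n) ℝ} (hδ : 0 < δ)
    (hA : ∀ i j, δ ≤ A i j ∧ A i j ≤ 1) :
    ∑ σ : Perm (Fin n), (cycleCount σ : ℝ) * ∏ l, A l (σ l) ≤
      (4 + 4 / 3 * (1 + Real.log (n / 4 : ℕ)) / δ ^ 2) * ∑ σ : Perm (Fin n), ∏ l, A l (σ l) := by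
  set m := n / 4
  set W : Perm (Fin n) → ℝ := fun σ => ∏ l, A l (σ l)
  set N : Perm (Fin n) → ℕ → ℝ := fun σ k => #{i | σ.cycleLength i = k}
  have hW : ∀ σ, 0 ≤ W σ := fun σ => prod_nonneg fun l _ => hδ.le.trans (hA _ _).1
  have hP : 0 ≤ ∑ σ, W σ := sum_nonneg fun σ _ => hW σ
  have hshort : ∀ k ∈ Icc 1 m, ∑ σ, N σ k * W σ ≤ 4 / 3 * (∑ σ, W σ) / δ ^ 2 := by
    intro k hk
    obtain ⟨hk₁, hkm⟩ := mem_Icc.1 hk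
    have h4k : 4 * (k : ℝ) ≤ n := by exact_mod_cast (by omega : 4 * k ≤ n)
    have hkey := sq_mul_card_sub_mul_sum_le hδ.le hA k
    rw [Fintype.card_fin] at hkey
    rw [le_div_iff₀ (by positivity)]
    have : (1 : ℝ) ≤ k := by exact_mod_cast hk₁
    nlinarith
  have hlong : (n : ℝ) / (m + 1) ≤ 4 := by
    rw [div_le_iff₀ (by positivity)]
    exact_mod_cast (by omega : n ≤ 4 * (m + 1))
  have hharm : ∑ k ∈ Icc 1 m, (k : ℝ)⁻¹ ≤ 1 + Real.log m := by
    simpa [harmonic_eq_sum_Icc] using harmonic_le_one_add_log m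
  calc ∑ σ, (cycleCount σ : ℝ) * W σ
      ≤ ∑ σ, ((n : ℝ) / (m + 1) + ∑ k ∈ Icc 1 m, N σ k / k) * W σ := by
        refine sum_le_sum fun σ _ => mul_le_mul_of_nonneg_right ?_ (hW σ)
        simpa [cycleCount_eq_sum_inv_cycleLength] using σ.sum_inv_cycleLength_le m
    _ = (n : ℝ) / (m + 1) * ∑ σ, W σ + ∑ k ∈ Icc 1 m, (k : ℝ)⁻¹ * ∑ σ, N σ k * W σ := by
        rw [sum_congr rfl fun σ _ => add_mul _ _ (W σ), sum_add_distrib, ← mul_sum]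
        simp only [sum_mul, mul_sum]
        rw [sum_comm]
        congr 1
        exact sum_congr rfl fun k _ => sum_congr rfl fun σ _ => by ring
    _ ≤ 4 * ∑ σ, W σ + ∑ k ∈ Icc 1 m, (k : ℝ)⁻¹ * (4 / 3 * (∑ σ, W σ) / δ ^ 2) := by
        gcongr with k hk
        exact hshort k hk
    _ ≤ 4 * ∑ σ, W σ + (1 + Real.log m) * (4 / 3 * (∑ σ, W σ) / δ ^ 2) := by
        rw [← sum_mul]
        gcongr
    _ = _ := by ring

theorem four_add_log_div_four_div_sq_le {n : ℕ} (hn : 5 ≤ n) {δ : ℝ} (hδ : 0 < δ) (hδ₁ : δ ≤ 1) :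
    4 + 4 / 3 * (1 + Real.log (n / 4 : ℕ)) / δ ^ 2 ≤ (1 + (4 + 4 * Real.log n / δ ^ 2)) / 2 := by
  have hlog4 : Real.log 4 = 2 * Real.log 2 := by
    rw [show (4 : ℝ) = 2 ^ 2 by norm_num, Real.log_pow, Nat.cast_ofNat]
  have hm : Real.log (n / 4 : ℕ) ≤ Real.log n - Real.log 4 := by
    rw [← Real.log_div (by positivity) (by norm_num)]
    refine Real.log_le_log (by exact_mod_cast (by omega : 0 < n / 4)) ?_
    rw [le_div_iff₀ (by norm_num)]
    exact_mod_cast Nat.div_mul_le_self n 4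
  have hn5 : Real.log 4 + 1 / 5 ≤ Real.log n := by
    have h45 := Real.log_le_sub_one_of_pos (show (0 : ℝ) < 4 / 5 by norm_num)
    rw [Real.log_div (by norm_num) (by norm_num)] at h45
    linarith [Real.log_le_log (by norm_num) (show (5 : ℝ) ≤ n by exact_mod_cast hn)]
  have hL : 3 / 2 ≤ 2 * Real.log n - 4 / 3 * (1 + Real.log (n / 4 : ℕ)) := by
    linarith [Real.log_two_gt_d9]
  have hLδ := le_div_self (by linarith : 0 ≤ 2 * Real.log n - 4 / 3 * (1 + Real.log (n / 4 : ℕ)))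
    (by positivity : 0 < δ ^ 2) (by nlinarith)
  have : (1 + (4 + 4 * Real.log n / δ ^ 2)) / 2 - (4 + 4 / 3 * (1 + Real.log (n / 4 : ℕ)) / δ ^ 2)
      = (2 * Real.log n - 4 / 3 * (1 + Real.log (n / 4 : ℕ))) / δ ^ 2 - 3 / 2 := by ring
  linarith

theorem few_cycles_dominate_general (n : ℕ) (δ : ℝ) (hδ0 : 0 < δ)
    (A : Matrix (Fin n) (Fin n) ℝ)
    (hA : ∀ i j, δ ≤ A i j ∧ A i j ≤ 1) :
    (1 / 2) * (∑ σ : Equiv.Perm (Fin n), ∏ k, A k (σ k)) ≤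
      ∑ σ ∈ Finset.univ.filter
        (fun σ : Equiv.Perm (Fin n) =>
          (cycleCount σ : ℝ) ≤ 4 + 4 * Real.log n / δ ^ 2),
        ∏ k, A k (σ k) := by
  set t := 4 + 4 * Real.log n / δ ^ 2
  have hW : ∀ σ : Perm (Fin n), 0 ≤ ∏ k, A k (σ k) :=
    fun σ => prod_nonneg fun k _ => hδ0.le.trans (hA _ _).1
  have hP : 0 ≤ ∑ σ : Perm (Fin n), ∏ k, A k (σ k) := sum_nonneg fun σ _ => hW σ
  have ht : 4 ≤ t := le_add_of_nonneg_right (by positivity)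
  by_cases hnt : (n : ℝ) ≤ t
  · rw [filter_true_of_mem fun σ _ => (cycleCount_le σ).trans hnt]
    linarith
  have hn : 5 ≤ n := by exact_mod_cast (by linarith : (4 : ℝ) < n)
  have hδ₁ : δ ≤ 1 := (hA ⟨0, by omega⟩ ⟨0, by omega⟩).1.trans (hA _ _).2
  refine half_sum_le_sum_filter_le univ (by linarith) (fun σ _ => one_le_cycleCount (by omega) σ)
    (fun σ _ => hW σ) ?_
  exact (sum_cycleCount_mul_prod_le hδ0 hA).trans
    (mul_le_mul_of_nonneg_right (four_add_log_div_four_div_sq_le hn hδ0 hδ₁) hP)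

/-- If `δ ≤ a_{ij} ≤ 1`, then the permutations with at most
`4 + 4δ⁻² ln n` cycles contribute at least half of the permanent. -/
theorem few_cycles_dominate (n : ℕ) (δ : ℝ) (hδ0 : 0 < δ) (hδ1 : δ < 1)
    (A : Matrix (Fin n) (Fin n) ℝ)
    (hA : ∀ i j, δ ≤ A i j ∧ A i j ≤ 1) :
    (1 / 2) * (∑ σ : Equiv.Perm (Fin n), ∏ k, A k (σ k)) ≤
      ∑ σ ∈ Finset.univ.filter
        (fun σ : Equiv.Perm (Fin n) =>
          (cycleCount σ : ℝ) ≤ 4 + 4 * Real.log n / δ ^ 2),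
        ∏ k, A k (σ k) :=
  few_cycles_dominate_general n δ hδ0 A hA
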